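/- For all nonnegative integers s, t with s + t ≤ k, the group Γ_k ⊆ U(p^k) contains a subgroup isomorphic to Γ_s × (ℤ/p)^t. -/

import Mathlib

/-!
Split an index `i < p ^ k` as `(i / p ^ s, i % p ^ s)`, identifying `ℂ^(p^k)` with
`ℂ^(p^(k-s)) ⊗ ℂ^(p^s)`. For `r < s` this turns `A_r`, `B_r` into `1 ⊗ A'_r`, `1 ⊗ B'_r`, and
`A_(s+j)` into `D_j ⊗ 1` with `D_j` diagonal, entry `ζ ^ (q / p ^ j)` at the block `q`. So
`(M, v) ↦ (∏ j, D_j ^ v_j) ⊗ M` is a homomorphism `Γ_s × (ℤ/p)^t → Γ_k`. It is injective: the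
diagonal factor is `1` on the block `q = 0`, which forces `M = 1`, and the blocks `q = p ^ j`
then read off each `v_j`.
-/

open Matrix Kronecker

namespace Nat

lemma div_pow_eq_mod_pow_div_add {p r s : ℕ} (hp : 0 < p) (hrs : r ≤ s) (i : ℕ) :
    i / p ^ r = i % p ^ s / p ^ r + p ^ (s - r) * (i / p ^ s) := by
  have hs : p ^ s = p ^ r * p ^ (s - r) := by rw [← pow_add, Nat.add_sub_cancel' hrs]
  have hi : i = i % p ^ s + p ^ r * (p ^ (s - r) * (i / p ^ s)) := by
    rw [← mul_assoc, ← hs, Nat.mod_add_div]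
  conv_lhs => rw [hi]
  rw [Nat.add_mul_div_left _ _ (pow_pos hp r)]

lemma div_pow_mod_eq_mod_pow_div_mod {p r s : ℕ} (hp : 0 < p) (hrs : r < s) (i : ℕ) :
    i / p ^ r % p = i % p ^ s / p ^ r % p := by
  obtain ⟨d, hd⟩ : ∃ d, s - r = d + 1 := ⟨s - r - 1, by omega⟩
  rw [div_pow_eq_mod_pow_div_add hp hrs.le, hd, pow_succ', mul_assoc, Nat.add_mul_mod_self_left]

lemma add_pow_lt_pow_of_div_pow_mod_lt {p r s m : ℕ} (hrs : r < s) (hm : m < p ^ s)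
    (hd : m / p ^ r % p < p - 1) : m + p ^ r < p ^ s := by
  have hp : 1 < p := by omega
  have hpr : 0 < p ^ r := pow_pos (by omega) r
  have hs : p ^ s = p ^ (s - r) * p ^ r := by rw [← pow_add, Nat.sub_add_cancel hrs.le]
  rw [hs, ← Nat.div_lt_iff_lt_mul hpr, Nat.add_div_right m hpr]
  rw [hs, ← Nat.div_lt_iff_lt_mul hpr] at hm
  refine lt_of_le_of_ne hm fun heq => ?_
  have hdvd : p ∣ m / p ^ r + 1 := heq ▸ dvd_pow_self p (Nat.sub_pos_of_lt hrs).ne'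
  have hsucc : (m / p ^ r + 1) % p = m / p ^ r % p + 1 := by
    rw [Nat.add_mod, Nat.one_mod_eq_one.mpr hp.ne', Nat.mod_eq_of_lt (by omega)]
  omega

lemma sub_one_mul_pow_le_of_le_div_pow_mod {p r m : ℕ} (hd : p - 1 ≤ m / p ^ r % p) :
    (p - 1) * p ^ r ≤ m :=
  calc (p - 1) * p ^ r ≤ m / p ^ r * p ^ r :=
        Nat.mul_le_mul_right _ (hd.trans (Nat.mod_le _ _))
    _ ≤ m := Nat.div_mul_le_self _ _

end Nat

-- Adds one, modulo `p`, to the base-`p` digit of `i` at position `r`.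
def digitShift (p r i : ℕ) : ℕ :=
  if i / p ^ r % p < p - 1 then i + p ^ r else i - (p - 1) * p ^ r

lemma digitShift_lt {p r s m : ℕ} (hrs : r < s) (hm : m < p ^ s) : digitShift p r m < p ^ s := by
  unfold digitShift
  split_ifs with hd
  · exact Nat.add_pow_lt_pow_of_div_pow_mod_lt hrs hm hd
  · omega

lemma digitShift_eq_mod_add {p r s : ℕ} (hp : 0 < p) (hrs : r < s) (i : ℕ) :
    digitShift p r i = digitShift p r (i % p ^ s) + p ^ s * (i / p ^ s) := by
  have hi := Nat.mod_add_div i (p ^ s)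
  unfold digitShift
  rw [Nat.div_pow_mod_eq_mod_pow_div_mod hp hrs i]
  split_ifs with hd
  · omega
  · have := Nat.sub_one_mul_pow_le_of_le_div_pow_mod (not_lt.mp hd)
    omega

-- The generators `A_r` and `B_r` of the paper, as matrices of size `n`.
def clockMatrix (p n r : ℕ) (ζ : ℂ) : Matrix (Fin n) (Fin n) ℂ :=
  diagonal fun i => ζ ^ ((i : ℕ) / p ^ r)

def shiftMatrix (p n r : ℕ) : Matrix (Fin n) (Fin n) ℂ :=
  of fun i j => if (j : ℕ) = digitShift p r i then 1 else 0

def powSplit (p : ℕ) {s k : ℕ} (h : s ≤ k) : Fin (p ^ (k - s)) × Fin (p ^ s) ≃ Fin (p ^ k) :=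
  finProdFinEquiv.trans (finCongr (by rw [← pow_add, Nat.sub_add_cancel h]))

section powSplit

variable {p s k : ℕ} (h : s ≤ k)

@[simp] lemma powSplit_symm_fst_val (i : Fin (p ^ k)) :
    ((powSplit p h).symm i).1.val = i / p ^ s := by
  simp [powSplit]

@[simp] lemma powSplit_symm_snd_val (i : Fin (p ^ k)) :
    ((powSplit p h).symm i).2.val = i % p ^ s := by
  simp [powSplit]

lemma reindex_one_kronecker_clockMatrix (hp : 0 < p) {ζ : ℂ} (hζ : ζ ^ p = 1) {r : ℕ}
    (hr : r < s) :
    reindex (powSplit p h) (powSplit p h) (1 ⊗ₖ clockMatrix p (p ^ s) r ζ) =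
      clockMatrix p (p ^ k) r ζ := by
  rw [clockMatrix, clockMatrix, ← diagonal_one, diagonal_kronecker_diagonal, reindex_apply,
    submatrix_diagonal_equiv]
  congr 1
  funext i
  obtain ⟨d, hd⟩ : ∃ d, s - r = d + 1 := ⟨s - r - 1, by omega⟩
  simp [Nat.div_pow_eq_mod_pow_div_add hp hr.le (i : ℕ), hd, pow_add, pow_succ', pow_mul, hζ]

lemma reindex_diagonal_kronecker_one {ζ : ℂ} (j : ℕ) :
    reindex (powSplit p h) (powSplit p h)
      (diagonal (fun q : Fin (p ^ (k - s)) => ζ ^ ((q : ℕ) / p ^ j)) ⊗ₖ 1) =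
      clockMatrix p (p ^ k) (s + j) ζ := by
  rw [clockMatrix, ← diagonal_one, diagonal_kronecker_diagonal, reindex_apply,
    submatrix_diagonal_equiv]
  congr 1
  funext i
  simp [pow_add, Nat.div_div_eq_div_mul]

lemma reindex_one_kronecker_shiftMatrix (hp : 0 < p) {r : ℕ} (hr : r < s) :
    reindex (powSplit p h) (powSplit p h) (1 ⊗ₖ shiftMatrix p (p ^ s) r) =
      shiftMatrix p (p ^ k) r := by
  ext i j
  have hps : 0 < p ^ s := pow_pos hp s
  have key : (j : ℕ) = digitShift p r i ↔
      (j : ℕ) % p ^ s = digitShift p r (i % p ^ s) ∧ (i : ℕ) / p ^ s = j / p ^ s := by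
    rw [digitShift_eq_mod_add hp hr, eq_comm, and_comm, eq_comm (a := (i : ℕ) / p ^ s),
      Nat.div_mod_unique hps]
    simp [digitShift_lt hr (Nat.mod_lt _ hps)]
  simp [shiftMatrix, one_apply, Fin.ext_iff, key, ite_and]

end powSplit

section Unitary

variable {α m n o : Type*} [CommRing α] [StarRing α] [Fintype m] [Fintype n] [Fintype o]
  [DecidableEq m] [DecidableEq n] [DecidableEq o]

lemma Matrix.reindex_mem_unitaryGroup (e : m ≃ o) {U : Matrix m m α}
    (hU : U ∈ unitaryGroup m α) : reindex e e U ∈ unitaryGroup o α := by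
  rw [mem_unitaryGroup_iff, star_eq_conjTranspose, conjTranspose_reindex, reindex_apply,
    reindex_apply, submatrix_mul_equiv, ← star_eq_conjTranspose, mem_unitaryGroup_iff.mp hU,
    submatrix_one_equiv]

def Matrix.kroneckerUnitaryHom (e : m × n ≃ o) :
    unitaryGroup m α × unitaryGroup n α →* unitaryGroup o α where
  toFun U := ⟨reindex e e (U.1 ⊗ₖ U.2),
    reindex_mem_unitaryGroup e (kronecker_mem_unitary U.1.2 U.2.2)⟩
  map_one' := Subtype.ext <| by simp
  map_mul' U V := Subtype.ext <| by simp [mul_kronecker_mul, submatrix_mul_equiv]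

end Unitary

lemma Matrix.eq_one_of_diagonal_kronecker_eq_one {α m n : Type*} [Semiring α] [DecidableEq m]
    [DecidableEq n] [Nonempty n] {d : m → α} {M : Matrix n n α}
    (h : diagonal d ⊗ₖ M = 1) {i : m} (hi : d i = 1) : d = 1 ∧ M = 1 := by
  have hM : M = 1 := by
    ext a b
    simpa [hi, one_apply] using congr_fun₂ h (i, a) (i, b)
  refine ⟨funext fun q => ?_, hM⟩
  obtain ⟨a⟩ := ‹Nonempty n›
  simpa [hM] using congr_fun₂ h (q, a) (q, a)

def Matrix.diagonalCircleHom (n : Type*) [Fintype n] [DecidableEq n] :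
    (n → Circle) →* unitaryGroup n ℂ where
  toFun d := ⟨diagonal fun i => d i, by
    rw [mem_unitaryGroup_iff, star_eq_conjTranspose, diagonal_conjTranspose,
      diagonal_mul_diagonal, ← diagonal_one]
    congr 1
    funext i
    simp [← Circle.coe_inv_eq_conj]⟩
  map_one' := Subtype.ext <| by simp
  map_mul' d d' := Subtype.ext <| by simp [diagonal_mul_diagonal]

lemma sum_pow_div_pow_nsmul {p t : ℕ} (hp : 1 < p) (v : Fin t → ZMod p) (j : Fin t) :
    ∑ i : Fin t, (p ^ (j : ℕ) / p ^ (i : ℕ)) • v i = v j := by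
  refine (Finset.sum_eq_single j (fun i _ hij => ?_) (by simp)).trans (by simp [Nat.div_self,
    pow_pos (by omega : 0 < p)])
  rcases lt_or_gt_of_ne (Fin.val_injective.ne hij) with hlt | hgt
  · obtain ⟨d, hd⟩ : ∃ d, (j : ℕ) - i = d + 1 := ⟨j - i - 1, by omega⟩
    rw [Nat.pow_div hlt.le (by omega), hd]
    simp [pow_succ, nsmul_eq_mul]
  · rw [Nat.div_eq_of_lt (Nat.pow_lt_pow_right hp hgt), zero_nsmul]

-- The diagonal of `∏ j, D_j ^ v_j`; as `p • x = 0` in `ZMod p`, only the base-`p` digits of `q`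
-- matter.
noncomputable def digitChar (p t n : ℕ) [NeZero p] :
    (Fin t → Multiplicative (ZMod p)) →* (Fin n → Circle) where
  toFun v q := ZMod.toCircle (∑ j : Fin t, ((q : ℕ) / p ^ (j : ℕ)) • (v j).toAdd)
  map_one' := by ext; simp
  map_mul' v w := by
    funext q
    simp [smul_add, Finset.sum_add_distrib, AddChar.map_add_eq_mul]

section digitChar

variable {p : ℕ} [NeZero p] {t n : ℕ}

lemma digitChar_apply_zero [NeZero n] (v : Fin t → Multiplicative (ZMod p)) :
    digitChar p t n v 0 = 1 := by
  simp [digitChar]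

lemma digitChar_mulSingle (j : Fin t) (q : Fin n) :
    digitChar p t n (Pi.mulSingle j (.ofAdd 1)) q =
      ZMod.toCircle (((q : ℕ) / p ^ (j : ℕ) : ℕ) : ZMod p) := by
  simp [digitChar, Pi.mulSingle_apply, apply_ite]

lemma digitChar_injective (hp : 1 < p) (hn : p ^ t ≤ n) :
    Function.Injective (digitChar p t n) := by
  rw [injective_iff_map_eq_one]
  intro v hv
  funext j
  have hj : p ^ (j : ℕ) < n := (Nat.pow_lt_pow_right hp j.2).trans_le hn
  have := congr_fun hv ⟨_, hj⟩
  simp only [digitChar, MonoidHom.coe_mk, OneHom.coe_mk, Pi.one_apply] at this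
  rw [sum_pow_div_pow_nsmul hp (fun i => (v i).toAdd),
    ← AddChar.map_zero_eq_one (ZMod.toCircle (N := p)), ZMod.injective_toCircle.eq_iff] at this
  exact this

end digitChar

lemma Subgroup.mem_of_mulSingle_ofAdd_one_mem {ι : Type*} [Fintype ι] [DecidableEq ι] {n : ℕ}
    {K : Subgroup (ι → Multiplicative (ZMod n))}
    (h : ∀ i, Pi.mulSingle (M := fun _ => Multiplicative (ZMod n)) i (.ofAdd 1) ∈ K)
    (v : ι → Multiplicative (ZMod n)) : v ∈ K := by
  rw [← Finset.univ_prod_mulSingle v]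
  refine K.prod_mem fun i _ => ?_
  have : v i = Multiplicative.ofAdd 1 ^ ((v i).toAdd.cast : ℤ) := by
    rw [← ofAdd_zsmul, zsmul_one, ZMod.intCast_zmod_cast, ofAdd_toAdd]
  rw [this, Pi.mulSingle_zpow]
  exact K.zpow_mem (h i) _

noncomputable def tensorEmbedding (p t : ℕ) [NeZero p] {s k : ℕ} (h : s ≤ k) :
    unitaryGroup (Fin (p ^ s)) ℂ × (Fin t → Multiplicative (ZMod p)) →*
      unitaryGroup (Fin (p ^ k)) ℂ :=
  (kroneckerUnitaryHom (powSplit p h)).comp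
    ((((diagonalCircleHom _).comp (digitChar p t _)).comp (MonoidHom.snd _ _)).prod
      (MonoidHom.fst _ _))

section tensorEmbedding

variable {p t s k : ℕ} [NeZero p] (h : s ≤ k)

lemma coe_tensorEmbedding (M : unitaryGroup (Fin (p ^ s)) ℂ)
    (v : Fin t → Multiplicative (ZMod p)) :
    (tensorEmbedding p t h (M, v) : Matrix (Fin (p ^ k)) (Fin (p ^ k)) ℂ) =
      reindex (powSplit p h) (powSplit p h)
        (diagonal (fun q => (digitChar p t _ v q : ℂ)) ⊗ₖ
          (M : Matrix (Fin (p ^ s)) (Fin (p ^ s)) ℂ)) :=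
  rfl

lemma coe_tensorEmbedding_one_right (M : unitaryGroup (Fin (p ^ s)) ℂ) :
    (tensorEmbedding p t h (M, 1) : Matrix (Fin (p ^ k)) (Fin (p ^ k)) ℂ) =
      reindex (powSplit p h) (powSplit p h)
        (1 ⊗ₖ (M : Matrix (Fin (p ^ s)) (Fin (p ^ s)) ℂ)) := by
  simp [coe_tensorEmbedding]

lemma tensorEmbedding_injective (hp : 1 < p) (ht : t ≤ k - s) :
    Function.Injective (tensorEmbedding p t h) := by
  rw [injective_iff_map_eq_one]
  rintro ⟨M, v⟩ hMv
  have hkron : diagonal (fun q : Fin (p ^ (k - s)) => (digitChar p t _ v q : ℂ)) ⊗ₖ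
      (M : Matrix (Fin (p ^ s)) (Fin (p ^ s)) ℂ) = 1 := by
    apply (reindex (powSplit p h) (powSplit p h)).injective
    rw [← coe_tensorEmbedding, hMv]
    simp
  obtain ⟨hd, hM⟩ :=
    eq_one_of_diagonal_kronecker_eq_one hkron (i := 0) (by simp [digitChar_apply_zero])
  have hv : digitChar p t _ v = 1 := funext fun q => Circle.ext (congr_fun hd q)
  exact Prod.ext (Subtype.ext hM)
    (digitChar_injective hp (Nat.pow_le_pow_right (by omega) ht) (hv.trans (map_one _).symm))

lemma tensorEmbedding_smul_one {M : unitaryGroup (Fin (p ^ s)) ℂ} {z : ℂ}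
    (hM : (M : Matrix (Fin (p ^ s)) (Fin (p ^ s)) ℂ) = z • 1) :
    (tensorEmbedding p t h (M, 1) : Matrix (Fin (p ^ k)) (Fin (p ^ k)) ℂ) = z • 1 := by
  simp [coe_tensorEmbedding_one_right, hM, kronecker_smul, submatrix_smul]

lemma tensorEmbedding_clockMatrix (hp : 0 < p) {ζ : ℂ} (hζ : ζ ^ p = 1) {r : ℕ} (hr : r < s)
    {M : unitaryGroup (Fin (p ^ s)) ℂ}
    (hM : (M : Matrix (Fin (p ^ s)) (Fin (p ^ s)) ℂ) = clockMatrix p (p ^ s) r ζ) :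
    (tensorEmbedding p t h (M, 1) : Matrix (Fin (p ^ k)) (Fin (p ^ k)) ℂ) =
      clockMatrix p (p ^ k) r ζ := by
  rw [coe_tensorEmbedding_one_right, hM, reindex_one_kronecker_clockMatrix h hp hζ hr]

lemma tensorEmbedding_shiftMatrix (hp : 0 < p) {r : ℕ} (hr : r < s)
    {M : unitaryGroup (Fin (p ^ s)) ℂ}
    (hM : (M : Matrix (Fin (p ^ s)) (Fin (p ^ s)) ℂ) = shiftMatrix p (p ^ s) r) :
    (tensorEmbedding p t h (M, 1) : Matrix (Fin (p ^ k)) (Fin (p ^ k)) ℂ) =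
      shiftMatrix p (p ^ k) r := by
  rw [coe_tensorEmbedding_one_right, hM, reindex_one_kronecker_shiftMatrix h hp hr]

lemma tensorEmbedding_mulSingle (j : Fin t) :
    (tensorEmbedding p t h (1, Pi.mulSingle j (.ofAdd 1)) :
      Matrix (Fin (p ^ k)) (Fin (p ^ k)) ℂ) =
      clockMatrix p (p ^ k) (s + j) (Complex.exp (2 * Real.pi * Complex.I / p)) := by
  rw [coe_tensorEmbedding, ← reindex_diagonal_kronecker_one h]
  congr 3
  funext q
  rw [digitChar_mulSingle, ZMod.toCircle_natCast, ← Complex.exp_nat_mul]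
  ring_nf

end tensorEmbedding

/-- For all nonnegative integers `s, t` with `s + t ≤ k`, the group `Γ_k ⊆ U(p^k)` contains a
subgroup isomorphic to `Γ_s × (ℤ/p)^t`: there is an injective group homomorphism
`Γ_s × (ℤ/p)^t → Γ_k`. -/
theorem Gamma_k_contains_Gamma_s_times_Delta_t (p k s t : ℕ) [Fact p.Prime]
    (hst : s + t ≤ k) (ζ : ℂ)
    (hζ : ζ = Complex.exp (2 * Real.pi * Complex.I / p))
    (A B : Fin k → Matrix.unitaryGroup (Fin (p ^ k)) ℂ)
    (hA : ∀ r : Fin k, (A r : Matrix (Fin (p ^ k)) (Fin (p ^ k)) ℂ)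
      = Matrix.diagonal fun i : Fin (p ^ k) => ζ ^ ((i : ℕ) / p ^ (r : ℕ)))
    (hB : ∀ r : Fin k, (B r : Matrix (Fin (p ^ k)) (Fin (p ^ k)) ℂ)
      = Matrix.of fun i j : Fin (p ^ k) =>
          if (j : ℕ) = (if ((i : ℕ) / p ^ (r : ℕ)) % p < p - 1
              then (i : ℕ) + p ^ (r : ℕ)
              else (i : ℕ) - (p - 1) * p ^ (r : ℕ))
          then (1 : ℂ) else 0)
    (Γk : Subgroup (Matrix.unitaryGroup (Fin (p ^ k)) ℂ))
    (hΓk : Γk = Subgroup.closure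
      ({g : Matrix.unitaryGroup (Fin (p ^ k)) ℂ |
          ∃ z : ℂ, (g : Matrix (Fin (p ^ k)) (Fin (p ^ k)) ℂ)
            = z • (1 : Matrix (Fin (p ^ k)) (Fin (p ^ k)) ℂ)}
        ∪ Set.range A ∪ Set.range B))
    (A' B' : Fin s → Matrix.unitaryGroup (Fin (p ^ s)) ℂ)
    (hA' : ∀ r : Fin s, (A' r : Matrix (Fin (p ^ s)) (Fin (p ^ s)) ℂ)
      = Matrix.diagonal fun i : Fin (p ^ s) => ζ ^ ((i : ℕ) / p ^ (r : ℕ)))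
    (hB' : ∀ r : Fin s, (B' r : Matrix (Fin (p ^ s)) (Fin (p ^ s)) ℂ)
      = Matrix.of fun i j : Fin (p ^ s) =>
          if (j : ℕ) = (if ((i : ℕ) / p ^ (r : ℕ)) % p < p - 1
              then (i : ℕ) + p ^ (r : ℕ)
              else (i : ℕ) - (p - 1) * p ^ (r : ℕ))
          then (1 : ℂ) else 0)
    (Γs : Subgroup (Matrix.unitaryGroup (Fin (p ^ s)) ℂ))
    (hΓs : Γs = Subgroup.closure
      ({g : Matrix.unitaryGroup (Fin (p ^ s)) ℂ |
          ∃ z : ℂ, (g : Matrix (Fin (p ^ s)) (Fin (p ^ s)) ℂ)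
            = z • (1 : Matrix (Fin (p ^ s)) (Fin (p ^ s)) ℂ)}
        ∪ Set.range A' ∪ Set.range B')) :
    ∃ f : Γs × (Fin t → Multiplicative (ZMod p)) →* Γk,
      Function.Injective f := by
  have hp : 1 < p := (Fact.out : p.Prime).one_lt
  have hsk : s ≤ k := by omega
  have hζp : ζ ^ p = 1 := hζ ▸ (Complex.isPrimitiveRoot_exp p (by omega)).pow_eq_one
  let G := tensorEmbedding p t hsk
  have hgen : _ ∪ Set.range A ∪ Set.range B ⊆ Γk := hΓk ▸ Subgroup.subset_closure
  have hfst : Γs ≤ Γk.comap (G.comp (MonoidHom.inl _ _)) := by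
    rw [hΓs, Subgroup.closure_le]
    rintro M ((⟨z, hz⟩ | ⟨r, rfl⟩) | ⟨r, rfl⟩)
    · exact hgen (.inl (.inl ⟨z, tensorEmbedding_smul_one hsk hz⟩))
    · exact hgen (.inl (.inr ⟨⟨r, by omega⟩, Subtype.ext ((hA _).trans
        (tensorEmbedding_clockMatrix hsk (by omega) hζp r.2 (hA' r)).symm)⟩))
    · exact hgen (.inr ⟨⟨r, by omega⟩, Subtype.ext ((hB _).trans
        (tensorEmbedding_shiftMatrix hsk (by omega) r.2 (hB' r)).symm)⟩)
  have hsnd : ∀ v, G (1, v) ∈ Γk :=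
    Subgroup.mem_of_mulSingle_ofAdd_one_mem (K := Γk.comap (G.comp (MonoidHom.inr _ _))) fun j =>
      hgen (.inl (.inr ⟨⟨s + j, by omega⟩, Subtype.ext ((hA _).trans
        (hζ ▸ tensorEmbedding_mulSingle hsk j).symm)⟩))
  refine ⟨(G.comp (Γs.subtype.prodMap (MonoidHom.id _))).codRestrict Γk fun ⟨m, v⟩ => ?_,
    fun x y hxy => ?_⟩
  · simpa [← map_mul] using Γk.mul_mem (hfst m.2) (hsnd v)
  · exact ((tensorEmbedding_injective hsk hp (by omega)).comp
      (Subtype.val_injective.prodMap Function.injective_id)) (congrArg Subtype.val hxy)
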